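/- Fix c > 0 and set u_n := (c+2)^{|n|·sin((π/2)·log₂(1+|n|))} for n ∈ ℤ. Let U be the bounded operator on ℓ²(ℤ,ℂ) determined by (Uf)(n) = (u_n/u_{n−1})·f(n−1) for all f ∈ ℓ²(ℤ,ℂ) and n ∈ ℤ. Then U is bounded with bounded inverse, and S₊(c⁻¹U) = S₊(c⁻¹(U*)⁻¹) = S₊(c⁻¹U⁻¹) = S₊(c⁻¹U*) = {0}; explicitly, for each T among U, U⁻¹, U*, (U*)⁻¹, the only f ∈ ℓ²(ℤ,ℂ) such that for every a > 1 there exists C ≥ 0 with ‖T^N f‖ ≤ C·(c·a)^N for all N ∈ ℕ is f = 0. -/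

import Mathlib

/-!
The exponent `φ x = x sin((π/2) log₂(1 + x))` changes by at most `4` between consecutive
integers, so with `K = c + 2` the ratios `u n / u (n ± 1)` lie in `[K⁻⁴, K⁴]`, and `U`, `U⁻¹`,
`U*`, `(U*)⁻¹` are bounded weighted shifts of step `±1` built from `u` or `u⁻¹`. Under `T^N` such
a shift moves the coordinate `k` of `f` to `k - N d`, multiplied by `v (k - N d) / v k`. Since
`φ m = ±m` at `m = 2^j - 1` according as `j ≡ 1` or `3 (mod 4)`, this factor exceeds
`K^(N - |k|)` for infinitely many `N`. So `‖T^N f‖ ≥ ε K^N` infinitely often when `f ≠ 0`, which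
rules out `‖T^N f‖ ≤ C (c a)^N` for `c a < K`.
-/

noncomputable section
open ContinuousLinearMap Real

/-- The Hilbert space `ℓ²(ℤ, ℂ)` of square-summable two-sided complex sequences. -/
abbrev l2 : Type := lp (fun _ : ℤ => ℂ) 2

/-- The set `S₊(c⁻¹T)` of vectors whose orbit grows slower than every `(c·a)^N`, `a > 1`. -/
def Splus (c : ℝ) (T : l2 →L[ℂ] l2) : Set l2 :=
  {f | ∀ a : ℝ, 1 < a → ∃ C : ℝ, 0 ≤ C ∧ ∀ N : ℕ, ‖(T ^ N) f‖ ≤ C * (c * a) ^ N}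

open scoped ENNReal
open Filter

theorem Memℓp.comp_equiv {α β E : Type*} [NormedAddCommGroup E] {p : ℝ≥0∞} (hp : 0 < p.toReal)
    {f : α → E} (hf : Memℓp f p) (e : β ≃ α) : Memℓp (f ∘ e) p :=
  (memℓp_gen_iff hp).2 (e.summable_iff.2 ((memℓp_gen_iff hp).1 hf))

namespace l2

def translate (d : ℤ) : l2 →L[ℂ] l2 :=
  LinearMap.mkContinuous
    { toFun f := ⟨fun n => f (n + d), (lp.memℓp f).comp_equiv (by norm_num) (Equiv.addRight d)⟩
      map_add' _ _ := rfl
      map_smul' _ _ := rfl }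
    1
    fun f => by
      have hp : 0 < (2 : ℝ≥0∞).toReal := by norm_num
      refine le_of_eq ?_
      rw [one_mul, lp.norm_eq_tsum_rpow hp, lp.norm_eq_tsum_rpow hp]
      exact congrArg (· ^ _) ((Equiv.addRight d).tsum_eq fun n => ‖f n‖ ^ (2 : ℝ≥0∞).toReal)

theorem exists_weightedShift (w : ℤ → ℂ) {K : ℝ} (hw : ∀ n, ‖w n‖ ≤ K) (d : ℤ) :
    ∃ T : l2 →L[ℂ] l2, ∀ f n, T f n = w n * f (n + d) :=
  ⟨lp.mapCLM 2 (fun n => w n • ContinuousLinearMap.id ℂ ℂ) ((norm_nonneg _).trans (hw 0))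
      (fun n => (norm_smul_le _ _).trans
        ((mul_le_of_le_one_right (norm_nonneg _) norm_id_le).trans (hw n))) ∘L translate d,
    fun _ _ => rfl⟩

end l2

-- `U` is the case `(u, -1)`; `U⁻¹`, `U*`, `(U*)⁻¹` are `(u, 1)`, `(u⁻¹, 1)`, `(u⁻¹, -1)`.
def IsAssociatedShift (T : l2 →L[ℂ] l2) (v : ℤ → ℝ) (d : ℤ) : Prop :=
  ∀ f n, T f n = ((v n / v (n + d) : ℝ) : ℂ) * f (n + d)

namespace IsAssociatedShift

variable {T S : l2 →L[ℂ] l2} {v : ℤ → ℝ} {d : ℤ}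

theorem pow_apply (hT : IsAssociatedShift T v d) (hv : ∀ n, v n ≠ 0) (N : ℕ) (f : l2) (n : ℤ) :
    (T ^ N) f n = ((v n / v (n + N * d) : ℝ) : ℂ) * f (n + N * d) := by
  induction N generalizing f with
  | zero => simp [div_self (hv n)]
  | succ N ih =>
    rw [pow_succ, mul_apply_eq_comp, ih, hT, ← mul_assoc, ← Complex.ofReal_mul,
      div_mul_div_cancel₀ (hv _), add_assoc, ← add_one_mul (N : ℤ) d]
    push_cast
    rfl

theorem comp_eq_one (hT : IsAssociatedShift T v d) (hS : IsAssociatedShift S v (-d))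
    (hv : ∀ n, v n ≠ 0) : T.comp S = 1 := by
  ext f n
  rw [comp_apply, hT, hS, add_neg_cancel_right, ← mul_assoc, ← Complex.ofReal_mul,
    div_mul_div_cancel₀ (hv _), div_self (hv n)]
  simp

theorem adjoint_eq (hT : IsAssociatedShift T v d)
    (hS : IsAssociatedShift S (fun n => (v n)⁻¹) (-d)) : adjoint T = S := by
  refine ((eq_adjoint_iff S T).2 fun x y => ?_).symm
  rw [lp.inner_eq_tsum, lp.inner_eq_tsum, ← (Equiv.addRight d).tsum_eq]
  refine tsum_congr fun n => ?_
  rw [Equiv.coe_addRight, hS, hT, add_neg_cancel_right, inv_div_inv]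
  simp only [RCLike.inner_apply, map_mul, Complex.conj_ofReal]
  ring

end IsAssociatedShift

theorem splus_eq_singleton_zero_of_frequently {c K : ℝ} (hc : 0 < c) (hcK : c < K) {T : l2 →L[ℂ] l2}
    (hT : ∀ f : l2, f ≠ 0 → ∃ ε > 0, ∃ᶠ N : ℕ in atTop, ε * K ^ N ≤ ‖(T ^ N) f‖) :
    Splus c T = {0} := by
  refine Set.eq_singleton_iff_unique_mem.2 ⟨fun a _ => ⟨0, le_rfl, fun N => by simp⟩, ?_⟩
  intro f hf
  by_contra hf0
  obtain ⟨ε, hε, hfreq⟩ := hT f hf0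
  obtain ⟨b, hcb, hbK⟩ := exists_between hcK
  have hb : 0 < b := hc.trans hcb
  obtain ⟨C, -, hC⟩ := hf (b / c) ((one_lt_div hc).2 hcb)
  have hgrow : Tendsto (fun N : ℕ => (K / b) ^ N) atTop atTop :=
    tendsto_pow_atTop_atTop_of_one_lt ((one_lt_div hb).2 hbK)
  obtain ⟨N, hN, hNlarge⟩ := (hfreq.and_eventually (hgrow.eventually_gt_atTop (C / ε))).exists
  have hKb : ε * K ^ N ≤ C * b ^ N := by
    simpa [mul_div_cancel₀ _ hc.ne'] using hN.trans (hC N)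
  rw [div_lt_iff₀ hε, div_pow, div_mul_eq_mul_div, lt_div_iff₀ (pow_pos hb N)] at hNlarge
  linarith

theorem IsAssociatedShift.splus_eq_singleton_zero {c K : ℝ} (hc : 0 < c) (hcK : c < K)
    {T : l2 →L[ℂ] l2} {v : ℤ → ℝ} {d : ℤ} (hT : IsAssociatedShift T v d) (hv : ∀ n, 0 < v n)
    (hgrowth : ∀ k : ℤ, ∃ ε > 0, ∃ᶠ N : ℕ in atTop, ε * K ^ N ≤ v (k - N * d)) :
    Splus c T = {0} := by
  refine splus_eq_singleton_zero_of_frequently hc hcK fun f hf => ?_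
  obtain ⟨k, hk⟩ : ∃ k, f k ≠ 0 := by
    by_contra! h
    exact hf (lp.ext (funext h))
  obtain ⟨ε, hε, hfreq⟩ := hgrowth k
  refine ⟨ε * ‖f k‖ / v k, by have := hv k; positivity, hfreq.mono fun N hN => ?_⟩
  calc ε * ‖f k‖ / v k * K ^ N = ε * K ^ N / v k * ‖f k‖ := by ring
    _ ≤ v (k - N * d) / v k * ‖f k‖ := by gcongr; exact (hv k).le
    _ = ‖(T ^ N) f (k - N * d)‖ := by
      rw [hT.pow_apply (fun n => (hv n).ne'), sub_add_cancel, norm_mul, Complex.norm_real,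
        Real.norm_of_nonneg (div_pos (hv _) (hv k)).le]
    _ ≤ ‖(T ^ N) f‖ := lp.norm_apply_le_norm two_ne_zero _ _

def oscExponent (x : ℝ) : ℝ := x * sin (π / 2 * logb 2 (1 + x))

theorem abs_oscExponent_add_one_sub_le {x : ℝ} (hx : 0 ≤ x) :
    |oscExponent (x + 1) - oscExponent x| ≤ 4 := by
  set A := π / 2 * logb 2 (1 + (x + 1))
  set B := π / 2 * logb 2 (1 + x)
  have hx1 : 0 < 1 + x := by linarith
  have hlog2 : 0.6931471803 < log 2 := log_two_gt_d9
  have hAB : x * |A - B| ≤ 3 := by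
    have hlog : log (1 + (x + 1)) - log (1 + x) ≤ 1 / (1 + x) := by
      rw [← log_div (by linarith) hx1.ne']
      have := log_le_sub_one_of_pos (show 0 < (1 + (x + 1)) / (1 + x) by positivity)
      rwa [show (1 + (x + 1)) / (1 + x) - 1 = 1 / (1 + x) by field_simp; ring] at this
    have hlog0 : 0 ≤ log (1 + (x + 1)) - log (1 + x) :=
      sub_nonneg.2 (log_le_log hx1 (by linarith))
    have hdiff : A - B = π / (2 * log 2) * (log (1 + (x + 1)) - log (1 + x)) := by
      simp only [A, B, logb]; ring
    rw [hdiff, abs_of_nonneg (by positivity)]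
    calc x * (π / (2 * log 2) * (log (1 + (x + 1)) - log (1 + x)))
        ≤ x * (π / (2 * log 2) * (1 / (1 + x))) := by gcongr
      _ = π / (2 * log 2) * (x / (1 + x)) := by ring
      _ ≤ π / (2 * log 2) * 1 := by gcongr; rw [div_le_one hx1]; linarith
      _ ≤ 3 := by rw [mul_one, div_le_iff₀ (by positivity)]; linarith [pi_lt_d2]
  calc |oscExponent (x + 1) - oscExponent x| = |sin A + x * (sin A - sin B)| := by
        congr 1; simp only [oscExponent, A, B]; ring
    _ ≤ |sin A| + x * |A - B| := by
        refine (abs_add_le _ _).trans (add_le_add_right ?_ _)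
        rw [abs_mul, abs_of_nonneg hx]
        exact mul_le_mul_of_nonneg_left (abs_sin_sub_sin_le A B) hx
    _ ≤ 1 + 3 := add_le_add (abs_sin_le_one A) hAB
    _ = 4 := by norm_num

theorem abs_oscExponent_sub_le {x y : ℝ} (hx : 0 ≤ x) (hy : 0 ≤ y) (hxy : |x - y| = 1) :
    |oscExponent x - oscExponent y| ≤ 4 := by
  rcases (abs_eq zero_le_one).1 hxy with h | h
  · obtain rfl : x = y + 1 := by linarith
    exact abs_oscExponent_add_one_sub_le hy
  · obtain rfl : y = x + 1 := by linarith
    rw [abs_sub_comm]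
    exact abs_oscExponent_add_one_sub_le hx

theorem exists_mul_oscExponent_eq {s : ℝ} (hs : s = 1 ∨ s = -1) (M : ℕ) :
    ∃ m : ℕ, M ≤ m ∧ s * oscExponent m = m := by
  obtain ⟨r, hr⟩ : ∃ r : ℕ, sin (π / 2 * r) = s := by
    rcases hs with rfl | rfl
    · exact ⟨1, by simp⟩
    · exact ⟨3, by rw [show π / 2 * (3 : ℕ) = π / 2 + π by push_cast; ring, sin_add_pi]; simp⟩
  refine ⟨2 ^ (4 * M + r) - 1, ?_, ?_⟩
  · have := Nat.lt_two_pow_self (n := 4 * M + r)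
    omega
  · have hlog : logb 2 (1 + ((2 ^ (4 * M + r) - 1 : ℕ) : ℝ)) = 4 * M + r := by
      rw [Nat.cast_sub Nat.one_le_two_pow]
      push_cast
      rw [add_sub_cancel, logb_pow, logb_self_eq_one one_lt_two]
      push_cast
      ring
    have hsin : sin (π / 2 * (4 * M + r)) = s := by
      rw [← hr, show π / 2 * (4 * M + r) = π / 2 * r + M * (2 * π) by ring,
        sin_add_nat_mul_two_pi]
    rw [oscExponent, hlog, hsin]
    rcases hs with rfl | rfl <;> ring

def oscWeight (K s : ℝ) (n : ℤ) : ℝ := K ^ (s * oscExponent |(n : ℝ)|)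

theorem oscWeight_pos {K : ℝ} (hK : 0 < K) (s : ℝ) (n : ℤ) : 0 < oscWeight K s n :=
  rpow_pos_of_pos hK _

theorem inv_oscWeight {K : ℝ} (hK : 0 ≤ K) (s : ℝ) (n : ℤ) :
    (oscWeight K s n)⁻¹ = oscWeight K (-s) n := by
  rw [oscWeight, oscWeight, neg_mul, rpow_neg hK]

theorem abs_oscWeight_div_le {K s : ℝ} (hK : 1 ≤ K) (hs : |s| ≤ 1) {d : ℤ}
    (hd : d = 1 ∨ d = -1) (n : ℤ) :
    |oscWeight K s n / oscWeight K s (n + d)| ≤ K ^ (4 : ℝ) := by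
  have hstep : |(|(n : ℝ)| - |((n + d : ℤ) : ℝ)|)| = 1 := by
    have : |(|n| - |n + d|)| = 1 := by
      simp only [Int.abs_eq_natAbs]; rcases hd with rfl | rfl <;> omega
    exact_mod_cast this
  have hosc := abs_oscExponent_sub_le (abs_nonneg _) (abs_nonneg _) hstep
  rw [oscWeight, oscWeight, ← rpow_sub (by linarith),
    abs_of_pos (rpow_pos_of_pos (by linarith) _)]
  refine rpow_le_rpow_of_exponent_le hK ?_
  rw [← mul_sub]
  calc _ ≤ |s * (oscExponent |(n : ℝ)| - oscExponent |((n + d : ℤ) : ℝ)|)| := le_abs_self _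
    _ ≤ 1 * 4 := by rw [abs_mul]; gcongr
    _ = 4 := one_mul 4

theorem frequently_le_oscWeight {K s : ℝ} (hK : 1 ≤ K) (hs : s = 1 ∨ s = -1) {d : ℤ}
    (hd : d = 1 ∨ d = -1) (k : ℤ) :
    ∃ ε > 0, ∃ᶠ N : ℕ in atTop, ε * K ^ N ≤ oscWeight K s (k - N * d) := by
  refine ⟨K ^ (-(k.natAbs : ℝ)), rpow_pos_of_pos (by linarith) _, frequently_atTop.2 fun M => ?_⟩
  obtain ⟨m, hMm, hm⟩ := exists_mul_oscExponent_eq hs (M + k.natAbs)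
  -- `N` is chosen so that `k - N d = -(m d)`, a point where `s φ = |·|`
  obtain ⟨N, hN⟩ : ∃ N : ℕ, (N : ℤ) = k * d + m := ⟨(k * d + m).toNat, by
    rw [Int.toNat_of_nonneg]; rcases hd with rfl | rfl <;> omega⟩
  have hidx : |((k - N * d : ℤ) : ℝ)| = m := by
    have : |k - N * d| = m := by
      rw [Int.abs_eq_natAbs]; rcases hd with rfl | rfl <;> omega
    exact_mod_cast this
  have hNm : (N : ℝ) - k.natAbs ≤ m := by
    have : (N : ℤ) - k.natAbs ≤ m := by rcases hd with rfl | rfl <;> omega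
    exact_mod_cast this
  refine ⟨N, by rcases hd with rfl | rfl <;> omega, ?_⟩
  rw [oscWeight, hidx, hm, ← rpow_natCast, ← rpow_add (by linarith)]
  exact rpow_le_rpow_of_exponent_le hK (by linarith)

theorem exists_isAssociatedShift_oscWeight {K s : ℝ} (hK : 1 ≤ K) (hs : |s| ≤ 1) {d : ℤ}
    (hd : d = 1 ∨ d = -1) : ∃ T, IsAssociatedShift T (oscWeight K s) d :=
  l2.exists_weightedShift _ (fun n => by
    rw [Complex.norm_real, Real.norm_eq_abs]; exact abs_oscWeight_div_le hK hs hd n) d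

theorem IsAssociatedShift.splus_oscWeight_eq_singleton_zero {c s : ℝ} (hc : 0 < c)
    (hs : s = 1 ∨ s = -1) {d : ℤ} (hd : d = 1 ∨ d = -1) {T : l2 →L[ℂ] l2}
    (hT : IsAssociatedShift T (oscWeight (c + 2) s) d) : Splus c T = {0} :=
  hT.splus_eq_singleton_zero hc (by linarith) (oscWeight_pos (by linarith) s)
    (frequently_le_oscWeight (by linarith) hs hd)

/-- For the weighted bilateral shift `U` with weights
`u n = (c+2) ^ (|n|·sin((π/2)·log₂(1+|n|)))`, the operator `U` has a bounded inverse, and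
`S₊(c⁻¹U) = S₊(c⁻¹(U*)⁻¹) = S₊(c⁻¹U⁻¹) = S₊(c⁻¹U*) = {0}`. -/
theorem stmt8 (c : ℝ) (hc : 0 < c)
    (u : ℤ → ℝ)
    (hu : ∀ n : ℤ,
      u n = (c + 2) ^ (|(n : ℝ)| * Real.sin (Real.pi / 2 * Real.logb 2 (1 + |(n : ℝ)|))))
    (U : l2 →L[ℂ] l2)
    (hU : ∀ (f : l2) (n : ℤ), U f n = ((u n / u (n - 1) : ℝ) : ℂ) * f (n - 1)) :
    ∃ Uinv : l2 →L[ℂ] l2,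
      U.comp Uinv = 1 ∧ Uinv.comp U = 1 ∧
      Splus c U = {0} ∧
      Splus c (adjoint Uinv) = {0} ∧
      Splus c Uinv = {0} ∧
      Splus c (adjoint U) = {0} := by
  have hK : 1 ≤ c + 2 := by linarith
  obtain rfl : u = oscWeight (c + 2) 1 := funext fun n => by rw [hu, oscWeight, one_mul]; rfl
  have hU' : IsAssociatedShift U (oscWeight (c + 2) 1) (-1) := fun f n => by
    simpa only [← sub_eq_add_neg] using hU f n
  have hne : ∀ n, oscWeight (c + 2) 1 n ≠ 0 := fun n => (oscWeight_pos (by linarith) 1 n).ne'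
  have hinv : (fun n => (oscWeight (c + 2) 1 n)⁻¹) = oscWeight (c + 2) (-1) :=
    funext (inv_oscWeight (by linarith) 1)
  obtain ⟨Uinv, hUinv⟩ :=
    exists_isAssociatedShift_oscWeight hK (s := 1) (by norm_num) (d := 1) (.inl rfl)
  obtain ⟨V, hV⟩ :=
    exists_isAssociatedShift_oscWeight hK (s := -1) (by norm_num) (d := 1) (.inl rfl)
  obtain ⟨W, hW⟩ :=
    exists_isAssociatedShift_oscWeight hK (s := -1) (by norm_num) (d := -1) (.inr rfl)
  have hadjU : adjoint U = V := hU'.adjoint_eq (by rwa [hinv, neg_neg])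
  have hadjUinv : adjoint Uinv = W := hUinv.adjoint_eq (by rwa [hinv])
  refine ⟨Uinv, hU'.comp_eq_one (by rwa [neg_neg]) hne, hUinv.comp_eq_one hU' hne, ?_, ?_, ?_, ?_⟩
  · exact hU'.splus_oscWeight_eq_singleton_zero hc (.inl rfl) (.inr rfl)
  · exact hadjUinv ▸ hW.splus_oscWeight_eq_singleton_zero hc (.inr rfl) (.inr rfl)
  · exact hUinv.splus_oscWeight_eq_singleton_zero hc (.inl rfl) (.inl rfl)
  · exact hadjU ▸ hV.splus_oscWeight_eq_singleton_zero hc (.inr rfl) (.inl rfl)
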